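/- arXiv:1407.0421 — 3 statements merged into one kernel-verified Lean document; each statement's English description precedes it below -/
import Mathlib

section
/- Let G be a group, P a subgroup of G, and m an element of P that commutes with every element of P. The formula (P·g) ◃ (P·h) = P·(g·h⁻¹·m·h) gives a well-defined binary operation on the set of right cosets of P in G: if g′ ∈ P·g and h′ ∈ P·h, then P·(g·h⁻¹·m·h) = P·(g′·h′⁻¹·m·h′). -/
open Pointwise

lemma coset_eq {G : Type*} [Group G] (P : Subgroup G) (p x : G) (hp : p ∈ P) :
    (P : Set G) * ({x} : Set G) = (P : Set G) * ({p * x} : Set G) := by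
  have : ({p * x} : Set G) = ({p} : Set G) * {x} := by
    rw [Set.singleton_mul_singleton]
  rw [this, ← mul_assoc, Subgroup.subgroup_mul_singleton hp]

/-- Joyce's coset quandle operation `(P·g) ◃ (P·h) = P·(g·h⁻¹·m·h)` is well defined on
right cosets: if `g' ∈ P·g` and `h' ∈ P·h`, then `P·(g·h⁻¹·m·h) = P·(g'·h'⁻¹·m·h')`. -/
theorem stmt1 {G : Type*} [Group G] (P : Subgroup G) (m : G) (hm : m ∈ P)
    (hcomm : ∀ p ∈ P, m * p = p * m) (g h g' h' : G)
    (hg' : g' ∈ (P : Set G) * ({g} : Set G)) (hh' : h' ∈ (P : Set G) * ({h} : Set G)) :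
    (P : Set G) * ({g * h⁻¹ * m * h} : Set G) =
      (P : Set G) * ({g' * h'⁻¹ * m * h'} : Set G) := by
  simp only [Set.mem_mul, Set.mem_singleton_iff, SetLike.mem_coe] at hg' hh'
  obtain ⟨p, hp, b, hb, rfl⟩ := hg'
  obtain ⟨q, hq, c, hc, rfl⟩ := hh'
  subst b; subst c
  have h1 : q⁻¹ * (m * q) = m := by
    rw [hcomm q hq, ← mul_assoc, inv_mul_cancel, one_mul]
  have key : (q * h)⁻¹ * m * (q * h) = h⁻¹ * m * h := by
    calc (q * h)⁻¹ * m * (q * h) = h⁻¹ * (q⁻¹ * (m * q)) * h := by group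
      _ = h⁻¹ * m * h := by rw [h1]
  calc (P : Set G) * ({g * h⁻¹ * m * h} : Set G)
      = (P : Set G) * ({p * (g * h⁻¹ * m * h)} : Set G) := coset_eq P p _ hp
    _ = (P : Set G) * ({p * g * (q * h)⁻¹ * m * (q * h)} : Set G) := by
        rw [show p * g * (q * h)⁻¹ * m * (q * h) = p * (g * ((q*h)⁻¹ * m * (q*h))) by group,
          key]; group
end

section
/- Let G be a group, P a subgroup of G, and m an element of P that commutes with every element of P. Then the set P\G of right cosets of P in G, equipped with Joyce's operation (P·g) ◃ (P·h) = P·(g·h⁻¹·m·h), is a quandle: (1) (P·g) ◃ (P·g) = P·g for all g ∈ G; (2) for each fixed coset P·h, the map P·g ↦ (P·g) ◃ (P·h) is a bijection of P\G, with inverse given by P·g ↦ P·(g·h⁻¹·m⁻¹·h); (3) ((P·g) ◃ (P·h)) ◃ (P·k) = ((P·g) ◃ (P·k)) ◃ ((P·h) ◃ (P·k)) for all g, h, k ∈ G. -/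
/-- The set `P\G` of right cosets of `P` in `G`, with Joyce's operation
`(P·g) ◃ (P·h) = P·(g·h⁻¹·m·h)` (for `m ∈ Z(P)`), is a quandle:
(1) idempotence, (2) for fixed `P·h` the map `P·g ↦ (P·g) ◃ (P·h)` is a bijection with
inverse `P·g ↦ P·(g·h⁻¹·m⁻¹·h)`, and (3) right self-distributivity. -/
theorem stmt2 {G : Type*} [Group G] (P : Subgroup G) (m : G) (hm : m ∈ P)
    (hcomm : ∀ p ∈ P, m * p = p * m) :
    ∃ op : Quotient (QuotientGroup.rightRel P) → Quotient (QuotientGroup.rightRel P) →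
        Quotient (QuotientGroup.rightRel P),
      (∀ g h : G,
        op (Quotient.mk (QuotientGroup.rightRel P) g) (Quotient.mk (QuotientGroup.rightRel P) h)
          = Quotient.mk (QuotientGroup.rightRel P) (g * h⁻¹ * m * h)) ∧
      (∀ x, op x x = x) ∧
      (∀ y, Function.Bijective fun x => op x y) ∧
      (∀ g h : G,
        op (Quotient.mk (QuotientGroup.rightRel P) (g * h⁻¹ * m⁻¹ * h))
            (Quotient.mk (QuotientGroup.rightRel P) h)
          = Quotient.mk (QuotientGroup.rightRel P) g ∧
        Quotient.mk (QuotientGroup.rightRel P) (g * h⁻¹ * m * h * h⁻¹ * m⁻¹ * h)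
          = Quotient.mk (QuotientGroup.rightRel P) g) ∧
      (∀ x y z, op (op x y) z = op (op x z) (op y z)) := by
  have key : ∀ n : G, (∀ p ∈ P, n * p = p * n) →
      ∀ g g' h h' : G, (QuotientGroup.rightRel P).r g g' → (QuotientGroup.rightRel P).r h h' →
      (QuotientGroup.rightRel P).r (g * h⁻¹ * n * h) (g' * h'⁻¹ * n * h') := by
    intro n hn g g' h h' hg hh
    rw [QuotientGroup.rightRel_apply] at hg hh ⊢
    have hc : n * (h' * h⁻¹) = (h' * h⁻¹) * n := hn _ hh
    have hconj : h'⁻¹ * n * h' = h⁻¹ * n * h := by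
      calc h'⁻¹ * n * h' = h'⁻¹ * (n * (h' * h⁻¹)) * h := by group
        _ = h'⁻¹ * ((h' * h⁻¹) * n) * h := by rw [hc]
        _ = h⁻¹ * n * h := by group
    have e : g' * h'⁻¹ * n * h' * (g * h⁻¹ * n * h)⁻¹
        = g' * (h'⁻¹ * n * h') * (h⁻¹ * n * h)⁻¹ * g⁻¹ := by group
    rw [e, hconj]
    have e2 : g' * (h⁻¹ * n * h) * (h⁻¹ * n * h)⁻¹ * g⁻¹ = g' * g⁻¹ := by group
    rw [e2]; exact hg
  have hcomm' : ∀ p ∈ P, m⁻¹ * p = p * m⁻¹ := by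
    intro p hp
    have := hcomm p hp
    calc m⁻¹ * p = m⁻¹ * (p * m) * m⁻¹ := by group
      _ = m⁻¹ * (m * p) * m⁻¹ := by rw [this]
      _ = p * m⁻¹ := by group
  refine ⟨Quotient.map₂ (fun g h => g * h⁻¹ * m * h)
      (fun g g' hg h h' hh => key m hcomm g g' h h' hg hh), fun g h => rfl, ?_, ?_, ?_, ?_⟩
  · intro x
    refine Quotient.inductionOn x fun g => ?_
    show Quotient.mk _ (g * g⁻¹ * m * g) = Quotient.mk _ g
    refine Quotient.sound (QuotientGroup.rightRel_apply.mpr ?_)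
    have : g * (g * g⁻¹ * m * g)⁻¹ = m⁻¹ := by group
    rw [this]; exact inv_mem hm
  · intro y
    let op' : Quotient (QuotientGroup.rightRel P) → Quotient (QuotientGroup.rightRel P) →
        Quotient (QuotientGroup.rightRel P) :=
      Quotient.map₂ (fun g h => g * h⁻¹ * m⁻¹ * h)
        (fun g g' hg h h' hh => key m⁻¹ hcomm' g g' h h' hg hh)
    refine Function.bijective_iff_has_inverse.mpr ⟨fun x => op' x y, ?_, ?_⟩
    · intro x
      refine Quotient.inductionOn₂ x y fun g h => ?_
      show Quotient.mk _ (g * h⁻¹ * m * h * h⁻¹ * m⁻¹ * h) = Quotient.mk _ g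
      have : g * h⁻¹ * m * h * h⁻¹ * m⁻¹ * h = g := by group
      rw [this]
    · intro x
      refine Quotient.inductionOn₂ x y fun g h => ?_
      show Quotient.mk _ (g * h⁻¹ * m⁻¹ * h * h⁻¹ * m * h) = Quotient.mk _ g
      have : g * h⁻¹ * m⁻¹ * h * h⁻¹ * m * h = g := by group
      rw [this]
  · intro g h
    constructor
    · show Quotient.mk _ (g * h⁻¹ * m⁻¹ * h * h⁻¹ * m * h) = Quotient.mk _ g
      have : g * h⁻¹ * m⁻¹ * h * h⁻¹ * m * h = g := by group
      rw [this]
    · have : g * h⁻¹ * m * h * h⁻¹ * m⁻¹ * h = g := by group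
      rw [this]
  · intro x y z
    refine Quotient.inductionOn₃ x y z fun g h k => ?_
    show Quotient.mk _ (g * h⁻¹ * m * h * k⁻¹ * m * k)
      = Quotient.mk _ (g * k⁻¹ * m * k * (h * k⁻¹ * m * k)⁻¹ * m * (h * k⁻¹ * m * k))
    have : g * k⁻¹ * m * k * (h * k⁻¹ * m * k)⁻¹ * m * (h * k⁻¹ * m * k)
        = g * h⁻¹ * m * h * k⁻¹ * m * k := by group
    rw [this]
end

section
/- Let G be a group acting on the right on a set Q (so q·1 = q and (q·g)·h = q·(g·h)), and suppose the action is transitive. Fix q₀ ∈ Q, let P = {g ∈ G : q₀·g = q₀} be the stabilizer of q₀, and let m ∈ P be an element commuting with every element of P. Suppose Q carries a binary operation ◃ satisfying (q₀·g) ◃ (q₀·h) = q₀·(g·h⁻¹·m·h) for all g, h ∈ G. Then the map Ψ : Q → P\G sending q₀·g to the right coset P·g is well-defined, bijective, and satisfies Ψ(x ◃ y) = Ψ(x) ◃ Ψ(y), where P\G carries Joyce's coset quandle operation (P·g) ◃ (P·h) = P·(g·h⁻¹·m·h); that is, Ψ is an isomorphism of Q onto the coset quandle (P\G, m). -/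
/-- Let `G` act transitively on the right on a set `Q`, fix `q₀ ∈ Q`, let `P` be the
stabilizer of `q₀`, and let `m ∈ P` commute with every element of `P`.  If `Q` carries a
binary operation `◃` with `(q₀·g) ◃ (q₀·h) = q₀·(g·h⁻¹·m·h)`, then the map `Ψ` sending
`q₀·g` to the right coset `P·g` is well defined, bijective, and intertwines `◃` with
Joyce's coset quandle operation on `P\G`; i.e. `Ψ` is a quandle isomorphism onto
`(P\G, m)`. -/
theorem stmt3 {G Q : Type*} [Group G] (act : Q → G → Q)
    (hact_one : ∀ q : Q, act q 1 = q)
    (hact_mul : ∀ (q : Q) (g h : G), act (act q g) h = act q (g * h))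
    (htrans : ∀ q q' : Q, ∃ g : G, act q g = q')
    (q₀ : Q) (P : Subgroup G) (hP : ∀ g : G, g ∈ P ↔ act q₀ g = q₀)
    (m : G) (hm : m ∈ P) (hcomm : ∀ p ∈ P, m * p = p * m)
    (tri : Q → Q → Q)
    (htri : ∀ g h : G, tri (act q₀ g) (act q₀ h) = act q₀ (g * h⁻¹ * m * h)) :
    ∃ (Ψ : Q → Quotient (QuotientGroup.rightRel P))
      (op : Quotient (QuotientGroup.rightRel P) → Quotient (QuotientGroup.rightRel P) →
        Quotient (QuotientGroup.rightRel P)),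
      (∀ g h : G,
        op (Quotient.mk (QuotientGroup.rightRel P) g) (Quotient.mk (QuotientGroup.rightRel P) h)
          = Quotient.mk (QuotientGroup.rightRel P) (g * h⁻¹ * m * h)) ∧
      (∀ g : G, Ψ (act q₀ g) = Quotient.mk (QuotientGroup.rightRel P) g) ∧
      Function.Bijective Ψ ∧
      (∀ x y : Q, Ψ (tri x y) = op (Ψ x) (Ψ y)) := by

  -- Key: cosets equal iff action values equal
  have key : ∀ g h : G, Quotient.mk (QuotientGroup.rightRel P) g
      = Quotient.mk (QuotientGroup.rightRel P) h ↔ act q₀ g = act q₀ h := by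
    intro g h
    rw [Quotient.eq, QuotientGroup.rightRel_apply, hP]
    constructor
    · intro hh
      have := congrArg (fun q => act q g) hh
      simpa [hact_mul] using this.symm
    · intro hh
      have := congrArg (fun q => act q g⁻¹) hh
      simp only [hact_mul] at this
      simp [hact_one] at this
      exact this.symm
  -- φ : quotient → Q
  set φ : Quotient (QuotientGroup.rightRel P) → Q :=
    fun a => Quotient.liftOn a (act q₀) (fun g h hgh => (key g h).mp (Quotient.sound hgh))
    with hφ
  have hφmk : ∀ g : G, φ (Quotient.mk (QuotientGroup.rightRel P) g) = act q₀ g := fun g => rfl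
  have hbij : Function.Bijective φ := by
    constructor
    · intro a b hab
      induction a using Quotient.inductionOn
      induction b using Quotient.inductionOn
      exact (key _ _).mpr hab
    · intro q
      obtain ⟨g, hg⟩ := htrans q₀ q
      exact ⟨Quotient.mk _ g, hg⟩
  set e := Equiv.ofBijective φ hbij with he
  refine ⟨e.symm, fun a b => e.symm (tri (φ a) (φ b)), ?_, ?_, ?_, ?_⟩
  · intro g h
    have : tri (φ (Quotient.mk (QuotientGroup.rightRel P) g))
        (φ (Quotient.mk (QuotientGroup.rightRel P) h)) = act q₀ (g * h⁻¹ * m * h) := htri g h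
    show e.symm (tri (φ (Quotient.mk (QuotientGroup.rightRel P) g))
        (φ (Quotient.mk (QuotientGroup.rightRel P) h))) = _
    rw [this]
    exact e.symm_apply_eq.mpr rfl
  · intro g
    exact e.symm_apply_eq.mpr rfl
  · exact e.symm.bijective
  · intro x y
    have hx : φ (e.symm x) = x := e.apply_symm_apply x
    have hy : φ (e.symm y) = y := e.apply_symm_apply y
    show e.symm (tri x y) = e.symm (tri (φ (e.symm x)) (φ (e.symm y)))
    rw [hx, hy]
end
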